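/- arXiv:2601.06128 — 4 statements merged into one kernel-verified Lean document; each statement's English description precedes it below -/
import Mathlib

section
/- Let N ≥ 1 and let ζ_1, …, ζ_N ∈ ℂ satisfy |ζ_k| = 1 for all k. Let F be the N×N matrix with entries F_{kj} = ζ_k^j for 1 ≤ k ≤ N and 0 ≤ j ≤ N−1, and define σ_min(F) := inf over unit vectors c ∈ ℂ^N of ‖Fc‖₂. Then σ_min(F) ≤ √N, and σ_min(F) = √N holds if and only if the ζ_k are pairwise distinct and ζ_k^N is independent of k (equivalently, {ζ_1,…,ζ_N} is exactly the set of N-th roots of some unimodular number a, i.e. a rotated copy of the N-th roots of unity). -/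
open scoped Matrix

/-- The least singular value (on the domain dimension) of a rectangular complex
matrix: `σ_min(F) = inf_{‖c‖₂ = 1} ‖F c‖₂`. -/
noncomputable def sigmaMin {m n : ℕ} (L : Matrix (Fin m) (Fin n) ℂ) : ℝ :=
  ⨅ x : {x : EuclideanSpace ℂ (Fin n) // ‖x‖ = 1}, ‖Matrix.toEuclideanLin L x.1‖

/-!
For any matrix `A` with `n` columns, `Aᴴ A - σ_min(A)² I` is positive semidefinite, so its trace
`tr(Aᴴ A) - n σ_min(A)²` is nonnegative, and it vanishes exactly when `Aᴴ A = σ_min(A)² I`.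
All entries of the Vandermonde matrix `F` of unimodular nodes have modulus one, so
`tr(Fᴴ F) = N²`: this gives `σ_min(F) ≤ √N` and reduces equality to `Fᴴ F = N I`, equivalently
`F Fᴴ = N I`. The off-diagonal entries of `F Fᴴ` are the geometric sums `∑_{j<N} (ζ_k / ζ_l)^j`,
which vanish iff `ζ_k ≠ ζ_l` and `ζ_k^N = ζ_l^N`.
-/

open scoped ComplexOrder

open Matrix

lemma Matrix.mul_eq_smul_one_comm {K ι : Type*} [Field K] [Fintype ι] [DecidableEq ι]
    {A B : Matrix ι ι K} {c : K} (hc : c ≠ 0) : A * B = c • 1 ↔ B * A = c • 1 := by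
  rw [← inv_smul_eq_iff₀ hc, ← inv_smul_eq_iff₀ hc, ← smul_mul, ← Matrix.mul_smul, mul_eq_one_comm]

lemma geom_sum_eq_zero_iff_ne_one_and_pow_eq_one {K : Type*} [Field K] [CharZero K] {x : K}
    {n : ℕ} (hn : n ≠ 0) : ∑ i ∈ Finset.range n, x ^ i = 0 ↔ x ≠ 1 ∧ x ^ n = 1 := by
  rcases eq_or_ne x 1 with rfl | hx
  · simp [hn]
  · rw [geom_sum_eq hx, div_eq_zero_iff, sub_eq_zero, sub_eq_zero]
    simp [hx]

section SigmaMin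

variable {m n : ℕ} (A : Matrix (Fin m) (Fin n) ℂ)

lemma sigmaMin_nonneg : 0 ≤ sigmaMin A :=
  Real.iInf_nonneg fun _ => norm_nonneg _

lemma sigmaMin_le_norm_toEuclideanLin {x : EuclideanSpace ℂ (Fin n)} (hx : ‖x‖ = 1) :
    sigmaMin A ≤ ‖toEuclideanLin A x‖ :=
  ciInf_le ⟨0, by rintro _ ⟨y, rfl⟩; exact norm_nonneg _⟩ (⟨x, hx⟩ : {x // ‖x‖ = 1})

lemma sigmaMin_mul_norm_le (x : EuclideanSpace ℂ (Fin n)) :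
    sigmaMin A * ‖x‖ ≤ ‖toEuclideanLin A x‖ := by
  rcases eq_or_ne x 0 with rfl | hx
  · simp
  have hx' : ‖x‖ ≠ 0 := norm_ne_zero_iff.mpr hx
  have hunit : ‖(‖x‖⁻¹ : ℂ) • x‖ = 1 := by
    rw [norm_smul, norm_inv, Complex.norm_real, norm_norm, inv_mul_cancel₀ hx']
  have h := sigmaMin_le_norm_toEuclideanLin A hunit
  rw [map_smul, norm_smul, norm_inv, Complex.norm_real, norm_norm,
    le_inv_mul_iff₀ ((norm_nonneg x).lt_of_ne' hx')] at h
  linarith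

lemma star_dotProduct_self_eq_norm_sq {ι : Type*} [Fintype ι] (v : ι → ℂ) :
    star v ⬝ᵥ v = ((‖WithLp.toLp 2 v‖ ^ 2 : ℝ) : ℂ) := by
  have := inner_self_eq_norm_sq_to_K (𝕜 := ℂ) (WithLp.toLp 2 v)
  rw [EuclideanSpace.inner_eq_star_dotProduct, dotProduct_comm] at this
  simpa using this

lemma star_dotProduct_mulVec_conjTranspose_mul_self_sub_smul_one (c : ℂ) (v : Fin n → ℂ) :
    star v ⬝ᵥ ((Aᴴ * A - c • 1) *ᵥ v) = star (A *ᵥ v) ⬝ᵥ (A *ᵥ v) - c * (star v ⬝ᵥ v) := by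
  rw [sub_mulVec, dotProduct_sub, ← mulVec_mulVec, dotProduct_mulVec, vecMul_conjTranspose,
    star_star, smul_mulVec, one_mulVec, dotProduct_smul, smul_eq_mul]

lemma posSemidef_conjTranspose_mul_self_sub_sigmaMin_sq :
    (Aᴴ * A - ((sigmaMin A ^ 2 : ℝ) : ℂ) • 1).PosSemidef := by
  refine .of_dotProduct_mulVec_nonneg ((isHermitian_conjTranspose_mul_self A).sub
    (isHermitian_one.smul (isSelfAdjoint_iff.mpr (Complex.conj_ofReal _)))) fun v => ?_
  have hle : (sigmaMin A * ‖WithLp.toLp 2 v‖) ^ 2 ≤ ‖WithLp.toLp 2 (A *ᵥ v)‖ ^ 2 :=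
    pow_le_pow_left₀ (mul_nonneg (sigmaMin_nonneg A) (norm_nonneg _)) (sigmaMin_mul_norm_le A _) 2
  rw [star_dotProduct_mulVec_conjTranspose_mul_self_sub_smul_one, star_dotProduct_self_eq_norm_sq,
    star_dotProduct_self_eq_norm_sq, ← Complex.ofReal_mul, ← Complex.ofReal_sub,
    Complex.zero_le_real]
  rw [mul_pow] at hle
  linarith

lemma norm_toEuclideanLin_eq_of_conjTranspose_mul_self_eq {c : ℝ} (hc : 0 ≤ c)
    (h : Aᴴ * A = (c : ℂ) • 1) (x : EuclideanSpace ℂ (Fin n)) :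
    ‖toEuclideanLin A x‖ = √c * ‖x‖ := by
  have hx := star_dotProduct_mulVec_conjTranspose_mul_self_sub_smul_one A c x.ofLp
  rw [h, sub_self, zero_mulVec, dotProduct_zero, star_dotProduct_self_eq_norm_sq,
    star_dotProduct_self_eq_norm_sq, WithLp.toLp_ofLp, ← Complex.ofReal_mul,
    ← Complex.ofReal_sub, eq_comm, Complex.ofReal_eq_zero, sub_eq_zero] at hx
  rw [← Real.sqrt_sq (norm_nonneg (toEuclideanLin A x)), toLpLin_apply, hx, Real.sqrt_mul hc,
    Real.sqrt_sq (norm_nonneg x)]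

lemma trace_conjTranspose_mul_self_sub_smul_one {c : ℝ} (htr : (Aᴴ * A).trace = n * c) (d : ℝ) :
    (Aᴴ * A - (d : ℂ) • 1).trace = ((n * (c - d) : ℝ) : ℂ) := by
  rw [trace_sub, htr, trace_smul, trace_one, Fintype.card_fin]
  push_cast
  ring

variable [NeZero n]

lemma sigmaMin_eq_of_norm_toEuclideanLin_eq {s : ℝ}
    (h : ∀ x, ‖toEuclideanLin A x‖ = s * ‖x‖) : sigmaMin A = s := by
  have : Nonempty {x : EuclideanSpace ℂ (Fin n) // ‖x‖ = 1} :=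
    ⟨⟨EuclideanSpace.single 0 1, by simp⟩⟩
  exact (iInf_congr fun x : {x : EuclideanSpace ℂ (Fin n) // ‖x‖ = 1} => by
    rw [h, x.2, mul_one]).trans ciInf_const

theorem sigmaMin_le_sqrt_of_trace_eq {c : ℝ} (htr : (Aᴴ * A).trace = n * c) :
    sigmaMin A ≤ √c := by
  have h := (posSemidef_conjTranspose_mul_self_sub_sigmaMin_sq A).trace_nonneg
  rw [trace_conjTranspose_mul_self_sub_smul_one A htr, Complex.zero_le_real] at h
  have hn : (0 : ℝ) < n := by exact_mod_cast NeZero.pos n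
  exact Real.le_sqrt_of_sq_le (sub_nonneg.mp ((mul_nonneg_iff_of_pos_left hn).mp h))

theorem sigmaMin_eq_sqrt_iff_of_trace_eq {c : ℝ} (hc : 0 ≤ c) (htr : (Aᴴ * A).trace = n * c) :
    sigmaMin A = √c ↔ Aᴴ * A = (c : ℂ) • 1 := by
  refine ⟨fun h => ?_, fun h => sigmaMin_eq_of_norm_toEuclideanLin_eq A
    (norm_toEuclideanLin_eq_of_conjTranspose_mul_self_eq A hc h)⟩
  have hP := posSemidef_conjTranspose_mul_self_sub_sigmaMin_sq A
  rw [h, Real.sq_sqrt hc] at hP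
  rw [← sub_eq_zero, ← hP.trace_eq_zero_iff, trace_conjTranspose_mul_self_sub_smul_one A htr,
    sub_self, mul_zero, Complex.ofReal_zero]

end SigmaMin

namespace Matrix

variable {n : ℕ} {ζ : Fin n → ℂ}

lemma conjTranspose_vandermonde_of_norm_eq_one (hζ : ∀ k, ‖ζ k‖ = 1) :
    (vandermonde ζ)ᴴ = (vandermonde ζ⁻¹)ᵀ := by
  ext j k
  simp [vandermonde_apply, Complex.inv_eq_conj (hζ k)]

lemma vandermonde_mul_conjTranspose_apply (hζ : ∀ k, ‖ζ k‖ = 1) (k l : Fin n) :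
    (vandermonde ζ * (vandermonde ζ)ᴴ) k l = ∑ j ∈ Finset.range n, (ζ k / ζ l) ^ j := by
  rw [conjTranspose_vandermonde_of_norm_eq_one hζ, vandermonde_mul_vandermonde_transpose,
    ← Fin.sum_univ_eq_sum_range]
  simp [div_eq_mul_inv]

lemma trace_conjTranspose_vandermonde_mul_self (hζ : ∀ k, ‖ζ k‖ = 1) :
    ((vandermonde ζ)ᴴ * vandermonde ζ).trace = n * (n : ℝ) := by
  have hζ0 : ∀ k, ζ k ≠ 0 := fun k => norm_ne_zero_iff.mp (by simp [hζ])
  rw [trace_mul_comm, trace]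
  simp [vandermonde_mul_conjTranspose_apply hζ, div_self (hζ0 _)]

theorem vandermonde_mul_conjTranspose_eq_smul_one_iff (hζ : ∀ k, ‖ζ k‖ = 1) :
    vandermonde ζ * (vandermonde ζ)ᴴ = (n : ℂ) • 1 ↔
      Function.Injective ζ ∧ ∀ k l, ζ k ^ n = ζ l ^ n := by
  have hζ0 : ∀ k, ζ k ≠ 0 := fun k => norm_ne_zero_iff.mp (by simp [hζ])
  have entry : ∀ k l,
      (vandermonde ζ * (vandermonde ζ)ᴴ) k l = ((n : ℂ) • 1 : Matrix _ _ ℂ) k l ↔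
        (k ≠ l → ζ k ≠ ζ l ∧ ζ k ^ n = ζ l ^ n) := by
    intro k l
    rw [vandermonde_mul_conjTranspose_apply hζ, Matrix.smul_apply, one_apply, smul_eq_mul]
    rcases eq_or_ne k l with rfl | hkl
    · simp [div_self (hζ0 k)]
    · rw [if_neg hkl, mul_zero, geom_sum_eq_zero_iff_ne_one_and_pow_eq_one k.pos.ne', div_pow,
        ne_eq, div_eq_one_iff_eq (hζ0 l), div_eq_one_iff_eq (pow_ne_zero _ (hζ0 l))]
      simp [hkl]
  simp_rw [← Matrix.ext_iff, entry]
  refine ⟨fun h => ⟨fun k l hkl => ?_, fun k l => ?_⟩,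
    fun ⟨hinj, hpow⟩ k l hkl => ⟨hinj.ne hkl, hpow k l⟩⟩
  · by_contra hne
    exact (h k l hne).1 hkl
  · rcases eq_or_ne k l with rfl | hne
    · rfl
    · exact (h k l hne).2

end Matrix

theorem stmt6 (N : ℕ) (hN : 1 ≤ N)
    (ζ : Fin N → ℂ) (hζ : ∀ k, ‖ζ k‖ = 1)
    (F : Matrix (Fin N) (Fin N) ℂ)
    (hF : ∀ k j, F k j = ζ k ^ (j : ℕ)) :
    sigmaMin F ≤ Real.sqrt N ∧
    (sigmaMin F = Real.sqrt N ↔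
      Function.Injective ζ ∧ ∃ a : ℂ, ‖a‖ = 1 ∧ ∀ k, ζ k ^ N = a) := by
  obtain rfl : F = vandermonde ζ := Matrix.ext hF
  have : NeZero N := ⟨by omega⟩
  have htr := trace_conjTranspose_vandermonde_mul_self hζ
  refine ⟨sigmaMin_le_sqrt_of_trace_eq _ htr, ?_⟩
  rw [sigmaMin_eq_sqrt_iff_of_trace_eq _ N.cast_nonneg htr, Complex.ofReal_natCast,
    mul_eq_smul_one_comm (NeZero.ne _), vandermonde_mul_conjTranspose_eq_smul_one_iff hζ]
  refine and_congr_right fun _ => ⟨fun h => ⟨ζ ⟨0, hN⟩ ^ N, by simp [hζ], fun k => h k _⟩, ?_⟩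
  rintro ⟨a, -, ha⟩ k l
  rw [ha, ha]
end

section
/- Fix η > 0, Λ > 0, and integers M ≥ N ≥ 1 with M ≥ 2; set ℓ := Λ/N. Choose the half-shifted equispaced design x_k := 2π(k − 1/2)/(M·ℓ) for k = 1, …, M, and let T_x be the M×N matrix with entries (T_x)_{kj} = γ_k(x_k)·exp(i·x_k·j·ℓ)·w_j, where γ_k(x_k) := −2i·sin((x_k + iη)·ℓ/2)·exp(i·x_k·ℓ/2) and w_j := exp(−η·(j + 1/2)·ℓ), 0 ≤ j ≤ N−1. Then: (i) the M×N matrix F_x with entries exp(i·x_k·j·ℓ) satisfies Fᴴ_x·F_x = M·I_N; (ii) min over k = 1,…,M of |γ_k(x_k)| equals 2·√(sinh²(η·ℓ/2) + sin²(π/(2M))); (iii) σ_min(T_x) ≥ 2·√M·√(sinh²(η·ℓ/2) + sin²(π/(2M)))·exp(−η·(Λ − ℓ/2)), where σ_min(T_x) := inf over unit vectors c ∈ ℂ^N of ‖T_x·c‖₂. -/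
/-! With the half-shifted design `x_k ℓ = 2π(k + 1/2)/M`, the columns of `F_x` are distinct columns
of the `M`-point discrete Fourier matrix multiplied by unimodular phases, hence orthogonal with
squared norm `M`. Since `|sin(a + ib)|² = sin² a + sinh² b`, the smallest `|γ_k|` belongs to the
grid angle `π(k + 1/2)/M` closest to `0` or `π`, i.e. to `π/(2M)`. Finally `T_x = D_γ F_x D_w`, and each
factor is bounded below on `ℓ²`: the diagonals by their smallest entry, `F_x` by `√M`. -/

open scoped Matrix

open Real in
theorem Real.sin_le_sin_of_le_of_le_pi_sub {ε a : ℝ} (hε₀ : 0 ≤ ε) (hε : ε ≤ π / 2)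
    (h₁ : ε ≤ a) (h₂ : a ≤ π - ε) : sin ε ≤ sin a := by
  rcases le_total a (π / 2) with h | h
  · exact sin_le_sin_of_le_of_le_pi_div_two (by linarith) h h₁
  · rw [← sin_pi_sub a]
    exact sin_le_sin_of_le_of_le_pi_div_two (by linarith) (by linarith) (by linarith)

open Real in
theorem Real.isLeast_range_sin_sq_half_shifted_grid {M : ℕ} (hM : 0 < M) :
    IsLeast (Set.range fun k : Fin M => sin (π * ((k : ℕ) + 1 / 2) / M) ^ 2)
      (sin (π / (2 * M)) ^ 2) := by
  have hM₁ : (1 : ℝ) ≤ M := by exact_mod_cast hM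
  refine ⟨⟨⟨0, hM⟩, by simp only [Nat.cast_zero]; congr 2; field_simp; norm_num⟩, ?_⟩
  rintro _ ⟨k, rfl⟩
  have hk : ((k : ℕ) : ℝ) + 1 ≤ M := by exact_mod_cast k.2
  have hangle : π * ((k : ℕ) + 1 / 2) / M = π / (2 * M) + π * (k : ℕ) / M := by
    field_simp; ring
  have hε : π / (2 * M) ≤ π / 2 := div_le_div_of_nonneg_left pi_pos.le two_pos (by linarith)
  have hstep : π * (k : ℕ) / M ≤ π - 2 * (π / (2 * M)) := by
    rw [div_le_iff₀ (by positivity)]; field_simp; nlinarith [pi_pos]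
  have hsin : sin (π / (2 * M)) ≤ sin (π * ((k : ℕ) + 1 / 2) / M) :=
    sin_le_sin_of_le_of_le_pi_sub (by positivity) hε
      (by rw [hangle, le_add_iff_nonneg_right]; positivity) (by rw [hangle]; linarith)
  exact pow_le_pow_left₀ (sin_nonneg_of_nonneg_of_le_pi (by positivity) (by linarith [pi_pos]))
    hsin 2

open Complex in
theorem Complex.norm_sin_add_mul_I (a b : ℝ) :
    ‖sin (a + b * I)‖ = √(Real.sin a ^ 2 + Real.sinh b ^ 2) := by
  have h : sin (a + b * I) =
      (Real.sin a * Real.cosh b : ℝ) + (Real.cos a * Real.sinh b : ℝ) * I := by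
    push_cast
    rw [sin_add_mul_I]
  rw [h, norm_def, normSq_add_mul_I]
  congr 1
  nlinarith [Real.sin_sq_add_cos_sq a, Real.cosh_sq b]

open Complex in
theorem Complex.norm_neg_two_I_mul_sin_mul_exp (ξ η ℓ : ℝ) :
    ‖-2 * I * sin ((ξ + η * I) * ℓ / 2) * exp (I * ξ * ℓ / 2)‖ =
      2 * √(Real.sinh (η * ℓ / 2) ^ 2 + Real.sin (ξ * ℓ / 2) ^ 2) := by
  have harg : (ξ + η * I) * ℓ / 2 = (ξ * ℓ / 2 : ℝ) + (η * ℓ / 2 : ℝ) * I := by push_cast; ring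
  have hphase : I * ξ * ℓ / 2 = (ξ * ℓ / 2 : ℝ) * I := by push_cast; ring
  rw [norm_mul, norm_mul, harg, hphase, norm_sin_add_mul_I, norm_exp_ofReal_mul_I, add_comm]
  simp

theorem Finset.sum_fin_pow_eq_zero {K : Type*} [Field K] {z : K} {M : ℕ}
    (hzM : z ^ M = 1) (hz : z ≠ 1) : ∑ k : Fin M, z ^ (k : ℕ) = 0 := by
  rw [Fin.sum_univ_eq_sum_range (z ^ ·) M, geom_sum_eq hz, hzM, sub_self, zero_div]

open Complex Real in
theorem Complex.sum_fin_exp_two_pi_I_eq_zero {M : ℕ} {d : ℤ} (hd : ¬ (M : ℤ) ∣ d) :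
    ∑ k : Fin M, exp (2 * π * I * d * (k : ℕ) / M) = 0 := by
  rcases eq_or_ne M 0 with rfl | hM
  · simp
  have hMC : (M : ℂ) ≠ 0 := Nat.cast_ne_zero.mpr hM
  set z := exp (2 * π * I * d / M)
  have hpow : ∀ n : ℕ, z ^ n = exp (2 * π * I * d * n / M) := fun n => by
    rw [← exp_nat_mul]; ring_nf
  have hzM : z ^ M = 1 := by
    rw [hpow, mul_div_cancel_right₀ _ hMC, mul_comm]
    exact exp_int_mul_two_pi_mul_I d
  have hz : z ≠ 1 := by
    rw [Ne, exp_eq_one_iff]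
    rintro ⟨n, hn⟩
    rw [div_eq_iff hMC] at hn
    have h : (d : ℂ) * (2 * π * I) = (M * n : ℤ) * (2 * π * I) := by
      push_cast; linear_combination hn
    exact hd ⟨n, by exact_mod_cast mul_right_cancel₀ two_pi_I_ne_zero h⟩
  simp_rw [← hpow]
  exact Finset.sum_fin_pow_eq_zero hzM hz

open Complex Real in
theorem Matrix.conjTranspose_mul_self_of_eq_exp_shifted_fourier {M N : ℕ} (hNM : N ≤ M) (s : ℝ)
    (F : Matrix (Fin M) (Fin N) ℂ)
    (hF : ∀ k j, F k j = exp (2 * π * I * ((k : ℕ) + s) * (j : ℕ) / M)) :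
    Fᴴ * F = (M : ℂ) • 1 := by
  ext j j'
  set d : ℤ := (j' : ℕ) - (j : ℕ)
  have hentry : ∀ k : Fin M, star (F k j) * F k j' =
      exp (2 * π * I * s * d / M) * exp (2 * π * I * d * (k : ℕ) / M) := fun k => by
    rw [hF, hF, star_def, ← Complex.exp_conj, ← Complex.exp_add, ← Complex.exp_add]
    congr 1
    simp only [d, map_div₀, map_mul, conj_ofReal, conj_I, map_add, map_natCast, map_ofNat]
    push_cast
    ring
  simp only [mul_apply, conjTranspose_apply, hentry, ← Finset.mul_sum, smul_apply, one_apply,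
    smul_eq_mul]
  split_ifs with hjj
  · simp [d, hjj]
  · have hd : ¬ (M : ℤ) ∣ d := fun hdvd => hjj <| Fin.ext <| by
      have := Int.eq_zero_of_abs_lt_dvd hdvd
        (abs_sub_lt_of_nonneg_of_lt (by omega) (by omega) (by omega) (by omega))
      omega
    rw [sum_fin_exp_two_pi_I_eq_zero hd, mul_zero, mul_zero]

section EuclideanNorm

variable {𝕜 : Type*} [RCLike 𝕜] {m n : Type*} [Fintype m] [Fintype n] [DecidableEq n]

theorem Matrix.norm_toEuclideanLin_of_conjTranspose_mul_self [DecidableEq m]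
    {A : Matrix m n 𝕜} {a : ℝ} (hA : Aᴴ * A = (a : 𝕜) • 1) (v : EuclideanSpace 𝕜 n) :
    ‖toEuclideanLin A v‖ = √a * ‖v‖ := by
  have hsq : ‖toEuclideanLin A v‖ ^ 2 = a * ‖v‖ ^ 2 := by
    rw [← RCLike.ofReal_inj (K := 𝕜)]
    push_cast
    rw [← inner_self_eq_norm_sq_to_K,
      ← LinearMap.adjoint_inner_right, ← toEuclideanLin_conjTranspose_eq_adjoint,
      ← LinearMap.comp_apply, ← toLpLin_mul_same, hA, LinearEquiv.map_smul, toLpLin_one,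
      LinearMap.smul_apply, LinearMap.id_apply, inner_smul_right, inner_self_eq_norm_sq_to_K]
  rw [← Real.sqrt_sq (norm_nonneg _), hsq, Real.sqrt_mul' _ (sq_nonneg _),
    Real.sqrt_sq (norm_nonneg _)]

theorem Matrix.mul_norm_le_norm_toEuclideanLin_diagonal {d : n → 𝕜} {a : ℝ} (ha : 0 ≤ a)
    (hd : ∀ i, a ≤ ‖d i‖) (v : EuclideanSpace 𝕜 n) :
    a * ‖v‖ ≤ ‖toEuclideanLin (diagonal d) v‖ := by
  rw [EuclideanSpace.norm_eq, EuclideanSpace.norm_eq, ← Real.sqrt_sq ha,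
    ← Real.sqrt_mul (sq_nonneg a), Finset.mul_sum]
  refine Real.sqrt_le_sqrt (Finset.sum_le_sum fun i _ => ?_)
  simp only [toLpLin_apply, WithLp.ofLp_toLp, mulVec_diagonal, norm_mul, mul_pow]
  exact mul_le_mul_of_nonneg_right (pow_le_pow_left₀ ha (hd i) 2) (sq_nonneg _)

theorem Matrix.mul_norm_le_norm_toEuclideanLin_diagonal_mul_mul_diagonal [DecidableEq m]
    {d : m → 𝕜} {A : Matrix m n 𝕜} {e : n → 𝕜} {α a β : ℝ} (hα : 0 ≤ α) (hd : ∀ i, α ≤ ‖d i‖)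
    (hA : Aᴴ * A = (a : 𝕜) • 1) (hβ : 0 ≤ β) (he : ∀ j, β ≤ ‖e j‖) (v : EuclideanSpace 𝕜 n) :
    α * √a * β * ‖v‖ ≤ ‖toEuclideanLin (diagonal d * A * diagonal e) v‖ := by
  rw [toLpLin_mul_same, toLpLin_mul_same, LinearMap.comp_apply, LinearMap.comp_apply]
  calc α * √a * β * ‖v‖ ≤ α * (√a * ‖toEuclideanLin (diagonal e) v‖) := by
        rw [mul_assoc, mul_assoc]
        gcongr
        exact mul_norm_le_norm_toEuclideanLin_diagonal hβ he v
    _ = α * ‖toEuclideanLin A (toEuclideanLin (diagonal e) v)‖ := by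
        rw [norm_toEuclideanLin_of_conjTranspose_mul_self hA]
    _ ≤ _ := mul_norm_le_norm_toEuclideanLin_diagonal hα hd _

end EuclideanNorm

theorem le_sigmaMin_of_forall_mul_norm_le {m n : ℕ} (hn : 0 < n) {T : Matrix (Fin m) (Fin n) ℂ}
    {b : ℝ} (h : ∀ c, b * ‖c‖ ≤ ‖Matrix.toEuclideanLin T c‖) : b ≤ sigmaMin T := by
  have : Nonempty {c : EuclideanSpace ℂ (Fin n) // ‖c‖ = 1} :=
    ⟨⟨EuclideanSpace.single ⟨0, hn⟩ 1, by simp⟩⟩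
  exact le_ciInf fun c => by simpa [c.2] using h c.1

open Real Matrix in
theorem stmt11_general (η Λ : ℝ) (hη : 0 < η) (hΛ : 0 < Λ)
    (M N : ℕ) (hN : 1 ≤ N) (hMN : N ≤ M)
    (ℓ : ℝ) (hℓ : ℓ = Λ / N)
    (x : Fin M → ℝ)
    (hx : ∀ k : Fin M, x k = 2 * Real.pi * (((k : ℕ) : ℝ) + 1 / 2) / ((M : ℝ) * ℓ))
    (γ : Fin M → ℂ)
    (hγ : ∀ k, γ k = (-2) * Complex.I *
      Complex.sin ((((x k : ℝ) : ℂ) + (η : ℂ) * Complex.I) * (ℓ : ℂ) / 2) *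
      Complex.exp (Complex.I * ((x k : ℝ) : ℂ) * (ℓ : ℂ) / 2))
    (w : Fin N → ℝ)
    (hw : ∀ j, w j = Real.exp (-η * (((j : ℕ) : ℝ) + 1 / 2) * ℓ))
    (F : Matrix (Fin M) (Fin N) ℂ)
    (hF : ∀ k j, F k j =
      Complex.exp (Complex.I * ((x k : ℝ) : ℂ) * ((j : ℕ) : ℂ) * (ℓ : ℂ)))
    (T : Matrix (Fin M) (Fin N) ℂ)
    (hT : ∀ k j, T k j = γ k * F k j * (w j : ℂ)) :
    Fᴴ * F = (M : ℂ) • (1 : Matrix (Fin N) (Fin N) ℂ) ∧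
    IsLeast (Set.range fun k => ‖γ k‖)
      (2 * Real.sqrt (Real.sinh (η * ℓ / 2) ^ 2 + Real.sin (Real.pi / (2 * M)) ^ 2)) ∧
    2 * Real.sqrt M *
        Real.sqrt (Real.sinh (η * ℓ / 2) ^ 2 + Real.sin (Real.pi / (2 * M)) ^ 2) *
        Real.exp (-η * (Λ - ℓ / 2))
      ≤ sigmaMin T := by
  have hℓ₀ : 0 < ℓ := hℓ ▸ div_pos hΛ (by exact_mod_cast hN)
  have hM : 0 < M := hN.trans hMN
  have hxℓ : ∀ k : Fin M, x k * ℓ = 2 * π * ((k : ℕ) + 1 / 2) / M := fun k => by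
    rw [hx k]; field_simp
  have hFF : Fᴴ * F = (M : ℂ) • 1 :=
    conjTranspose_mul_self_of_eq_exp_shifted_fourier hMN (1 / 2) F fun k j => by
      have hxℓC := congrArg ((↑) : ℝ → ℂ) (hxℓ k)
      push_cast at hxℓC
      rw [hF]; congr 1; push_cast; linear_combination (Complex.I * (j : ℕ)) * hxℓC
  have hγnorm : ∀ k : Fin M,
      ‖γ k‖ = 2 * √(sinh (η * ℓ / 2) ^ 2 + sin (π * ((k : ℕ) + 1 / 2) / M) ^ 2) := fun k => by
    rw [hγ, Complex.norm_neg_two_I_mul_sin_mul_exp, mul_div_assoc, hxℓ k]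
    ring_nf
  have hγmin : IsLeast (Set.range fun k => ‖γ k‖)
      (2 * √(sinh (η * ℓ / 2) ^ 2 + sin (π / (2 * M)) ^ 2)) := by
    have hmono : Monotone fun t => 2 * √(sinh (η * ℓ / 2) ^ 2 + t) := fun _ _ hst =>
      mul_le_mul_of_nonneg_left (sqrt_le_sqrt (add_le_add_right hst _)) two_pos.le
    simpa only [← Set.range_comp, Function.comp_def, hγnorm] using
      hmono.map_isLeast (isLeast_range_sin_sq_half_shifted_grid hM)
  refine ⟨hFF, hγmin, le_sigmaMin_of_forall_mul_norm_le hN fun c => ?_⟩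
  have hwmin : ∀ j, exp (-η * (Λ - ℓ / 2)) ≤ ‖(w j : ℂ)‖ := fun j => by
    have hj : ((j : ℕ) : ℝ) + 1 ≤ N := by exact_mod_cast j.2
    have hΛℓ : Λ = N * ℓ := by rw [hℓ]; field_simp
    rw [Complex.norm_real, hw, Real.norm_of_nonneg (exp_pos _).le, exp_le_exp, hΛℓ]
    nlinarith [mul_pos hη hℓ₀]
  have hTfac : T = diagonal γ * F * diagonal fun j => (w j : ℂ) := by
    ext k j
    simp [hT, mul_diagonal, diagonal_mul]
  rw [hTfac]
  refine le_of_eq_of_le (by ring) (mul_norm_le_norm_toEuclideanLin_diagonal_mul_mul_diagonal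
    (by positivity) (fun k => hγmin.2 ⟨k, rfl⟩) (a := M) (by rw [hFF, RCLike.ofReal_natCast])
    (exp_pos _).le hwmin c)

theorem stmt11 (η Λ : ℝ) (hη : 0 < η) (hΛ : 0 < Λ)
    (M N : ℕ) (hN : 1 ≤ N) (hMN : N ≤ M) (hM : 2 ≤ M)
    (ℓ : ℝ) (hℓ : ℓ = Λ / N)
    (x : Fin M → ℝ)
    (hx : ∀ k : Fin M, x k = 2 * Real.pi * (((k : ℕ) : ℝ) + 1 / 2) / ((M : ℝ) * ℓ))
    (γ : Fin M → ℂ)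
    (hγ : ∀ k, γ k = (-2) * Complex.I *
      Complex.sin ((((x k : ℝ) : ℂ) + (η : ℂ) * Complex.I) * (ℓ : ℂ) / 2) *
      Complex.exp (Complex.I * ((x k : ℝ) : ℂ) * (ℓ : ℂ) / 2))
    (w : Fin N → ℝ)
    (hw : ∀ j, w j = Real.exp (-η * (((j : ℕ) : ℝ) + 1 / 2) * ℓ))
    (F : Matrix (Fin M) (Fin N) ℂ)
    (hF : ∀ k j, F k j =
      Complex.exp (Complex.I * ((x k : ℝ) : ℂ) * ((j : ℕ) : ℂ) * (ℓ : ℂ)))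
    (T : Matrix (Fin M) (Fin N) ℂ)
    (hT : ∀ k j, T k j = γ k * F k j * (w j : ℂ)) :
    Fᴴ * F = (M : ℂ) • (1 : Matrix (Fin N) (Fin N) ℂ) ∧
    IsLeast (Set.range fun k => ‖γ k‖)
      (2 * Real.sqrt (Real.sinh (η * ℓ / 2) ^ 2 + Real.sin (Real.pi / (2 * M)) ^ 2)) ∧
    2 * Real.sqrt M *
        Real.sqrt (Real.sinh (η * ℓ / 2) ^ 2 + Real.sin (Real.pi / (2 * M)) ^ 2) *
        Real.exp (-η * (Λ - ℓ / 2))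
      ≤ sigmaMin T :=
  stmt11_general η Λ hη hΛ M N hN hMN ℓ hℓ x hx γ hγ w hw F hF T hT
end

section
/- Let d ≥ 1, let E = EuclideanSpace ℝ (Fin d), fix r > 0, and let F : E → E be continuously differentiable on the closed ball B̄(0,r) with F(0) = 0. Let T := DF(0) be invertible with M₀ := ‖T⁻¹‖ (operator norm), and suppose there is B ≥ 0 with ‖DF(x) − DF(y)‖ ≤ B·‖x − y‖ for all x, y ∈ B̄(0,r), and that B·M₀·r ≤ 1/2. Set δ := r/(2·M₀). Then: (1) for every y ∈ E with ‖y‖ ≤ δ there exists a unique x ∈ B̄(0,r) with F(x) = y; (2) if F(x₁) = y₁ and F(x₂) = y₂ with x₁, x₂ ∈ B̄(0,r) and ‖y₁‖, ‖y₂‖ ≤ δ, then ‖x₁ − x₂‖ ≤ 2·M₀·‖y₁ − y₂‖. -/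
theorem stmt14 (d : ℕ) (hd : 1 ≤ d) (r : ℝ) (hr : 0 < r)
    (F : EuclideanSpace ℝ (Fin d) → EuclideanSpace ℝ (Fin d))
    (f' : EuclideanSpace ℝ (Fin d) → EuclideanSpace ℝ (Fin d) →L[ℝ] EuclideanSpace ℝ (Fin d))
    (hF0 : F 0 = 0)
    (hderiv : ∀ x ∈ Metric.closedBall (0 : EuclideanSpace ℝ (Fin d)) r,
      HasFDerivAt F (f' x) x)
    (T : EuclideanSpace ℝ (Fin d) ≃L[ℝ] EuclideanSpace ℝ (Fin d))
    (hT : (T : EuclideanSpace ℝ (Fin d) →L[ℝ] EuclideanSpace ℝ (Fin d)) = f' 0)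
    (M₀ B : ℝ)
    (hM₀ : M₀ = ‖(T.symm : EuclideanSpace ℝ (Fin d) →L[ℝ] EuclideanSpace ℝ (Fin d))‖)
    (hB : 0 ≤ B)
    (hLip : ∀ x ∈ Metric.closedBall (0 : EuclideanSpace ℝ (Fin d)) r,
      ∀ y ∈ Metric.closedBall (0 : EuclideanSpace ℝ (Fin d)) r,
        ‖f' x - f' y‖ ≤ B * ‖x - y‖)
    (hsmall : B * M₀ * r ≤ 1 / 2) :
    (∀ y : EuclideanSpace ℝ (Fin d), ‖y‖ ≤ r / (2 * M₀) →
      ∃! x : EuclideanSpace ℝ (Fin d),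
        x ∈ Metric.closedBall (0 : EuclideanSpace ℝ (Fin d)) r ∧ F x = y) ∧
    (∀ x₁ x₂ : EuclideanSpace ℝ (Fin d),
      x₁ ∈ Metric.closedBall (0 : EuclideanSpace ℝ (Fin d)) r →
      x₂ ∈ Metric.closedBall (0 : EuclideanSpace ℝ (Fin d)) r →
      ‖F x₁‖ ≤ r / (2 * M₀) → ‖F x₂‖ ≤ r / (2 * M₀) →
      ‖x₁ - x₂‖ ≤ 2 * M₀ * ‖F x₁ - F x₂‖) := by
  set S := Metric.closedBall (0 : EuclideanSpace ℝ (Fin d)) r with hS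
  have hne : Nontrivial (EuclideanSpace ℝ (Fin d)) := by
    haveI : Nonempty (Fin d) := ⟨⟨0, hd⟩⟩
    infer_instance
  have hM₀pos : 0 < M₀ := by
    obtain ⟨v, hv⟩ := exists_ne (0 : EuclideanSpace ℝ (Fin d))
    have hv' : (0:ℝ) < ‖v‖ := norm_pos_iff.mpr hv
    have h1 : ‖v‖ ≤ M₀ * ‖T v‖ := by
      have := (T.symm : EuclideanSpace ℝ (Fin d) →L[ℝ] EuclideanSpace ℝ (Fin d)).le_opNorm (T v)
      simpa [hM₀] using this
    nlinarith [norm_nonneg (T v),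
      mul_nonneg (hM₀.symm ▸ norm_nonneg _ : (0:ℝ) ≤ M₀) (norm_nonneg (T v))]
  have hM₀nn : 0 ≤ M₀ := hM₀pos.le
  have hTs : ∀ z : EuclideanSpace ℝ (Fin d), ‖T.symm z‖ ≤ M₀ * ‖z‖ := by
    intro z
    simpa [hM₀] using
      (T.symm : EuclideanSpace ℝ (Fin d) →L[ℝ] EuclideanSpace ℝ (Fin d)).le_opNorm z
  have key : ∀ x₁ ∈ S, ∀ x₂ ∈ S,
      ‖(x₁ - x₂) - T.symm (F x₁ - F x₂)‖ ≤ (1/2) * ‖x₁ - x₂‖ := by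
    intro x₁ h₁ x₂ h₂
    have hHder : ∀ x ∈ S, HasFDerivWithinAt (fun z => F z - T z)
        (f' x - (T : EuclideanSpace ℝ (Fin d) →L[ℝ] EuclideanSpace ℝ (Fin d))) S x := by
      intro x hx
      exact ((hderiv x hx).sub
        ((T : EuclideanSpace ℝ (Fin d) →L[ℝ] EuclideanSpace ℝ (Fin d)).hasFDerivAt)).hasFDerivWithinAt
    have hbound : ∀ x ∈ S,
        ‖f' x - (T : EuclideanSpace ℝ (Fin d) →L[ℝ] EuclideanSpace ℝ (Fin d))‖ ≤ B * r := by
      intro x hx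
      have h0 : (0:EuclideanSpace ℝ (Fin d)) ∈ S := Metric.mem_closedBall_self hr.le
      have hxy := hLip x hx 0 h0
      have hxr : ‖x - 0‖ ≤ r := by
        simpa [hS, Metric.mem_closedBall, dist_eq_norm] using hx
      calc ‖f' x - (T : EuclideanSpace ℝ (Fin d) →L[ℝ] EuclideanSpace ℝ (Fin d))‖
          = ‖f' x - f' 0‖ := by rw [hT]
        _ ≤ B * ‖x - 0‖ := hxy
        _ ≤ B * r := by nlinarith
    have hmvt : ‖(F x₁ - T x₁) - (F x₂ - T x₂)‖ ≤ (B * r) * ‖x₁ - x₂‖ :=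
      (convex_closedBall (0:EuclideanSpace ℝ (Fin d)) r).norm_image_sub_le_of_norm_hasFDerivWithin_le
        hHder hbound h₂ h₁
    have heq : (x₁ - x₂) - T.symm (F x₁ - F x₂)
        = - T.symm ((F x₁ - T x₁) - (F x₂ - T x₂)) := by
      simp only [map_sub, ContinuousLinearEquiv.symm_apply_apply]
      abel
    rw [heq, norm_neg]
    calc ‖T.symm ((F x₁ - T x₁) - (F x₂ - T x₂))‖
        ≤ M₀ * ‖(F x₁ - T x₁) - (F x₂ - T x₂)‖ := hTs _
      _ ≤ M₀ * ((B * r) * ‖x₁ - x₂‖) := mul_le_mul_of_nonneg_left hmvt hM₀nn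
      _ ≤ (1/2) * ‖x₁ - x₂‖ := by nlinarith [norm_nonneg (x₁ - x₂)]
  have part2 : ∀ x₁ ∈ S, ∀ x₂ ∈ S, ‖x₁ - x₂‖ ≤ 2 * M₀ * ‖F x₁ - F x₂‖ := by
    intro x₁ h₁ x₂ h₂
    have h1 : ‖x₁ - x₂‖ ≤ ‖(x₁ - x₂) - T.symm (F x₁ - F x₂)‖ + ‖T.symm (F x₁ - F x₂)‖ := by
      simpa using norm_add_le ((x₁ - x₂) - T.symm (F x₁ - F x₂)) (T.symm (F x₁ - F x₂))
        |>.trans_eq' (by rw [sub_add_cancel])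
    have h2 := key x₁ h₁ x₂ h₂
    have h3 := hTs (F x₁ - F x₂)
    linarith
  constructor
  · intro y hy
    have hTsy : ‖T.symm y‖ ≤ r / 2 := by
      have h1 : ‖T.symm y‖ ≤ M₀ * (r / (2 * M₀)) :=
        (hTs y).trans (mul_le_mul_of_nonneg_left hy hM₀nn)
      calc ‖T.symm y‖ ≤ M₀ * (r / (2 * M₀)) := h1
        _ = r / 2 := by field_simp
    have hmaps : ∀ x ∈ S, (x - T.symm (F x - y)) ∈ S := by
      intro x hx
      have h0 : (0:EuclideanSpace ℝ (Fin d)) ∈ S := Metric.mem_closedBall_self hr.le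
      have hk := key x hx 0 h0
      have hxr : ‖x‖ ≤ r := by simpa [hS, Metric.mem_closedBall, dist_eq_norm] using hx
      have heq : x - T.symm (F x - y) = (x - T.symm (F x)) + T.symm y := by
        rw [map_sub]; abel
      have hk' : ‖x - T.symm (F x)‖ ≤ (1/2) * ‖x‖ := by
        simpa [hF0] using hk
      have hle : ‖x - T.symm (F x - y)‖ ≤ (1/2) * ‖x‖ + r/2 := by
        rw [heq]
        exact (norm_add_le _ _).trans (by linarith)
      simp only [hS, Metric.mem_closedBall, dist_eq_norm, sub_zero]
      linarith
    haveI : Nonempty S := ⟨⟨0, Metric.mem_closedBall_self hr.le⟩⟩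
    haveI : CompleteSpace S := Metric.isClosed_closedBall.completeSpace_coe
    set g : S → S := fun x => ⟨x.1 - T.symm (F x.1 - y), hmaps x.1 x.2⟩ with hg
    have hcontract : ContractingWith (1/2 : NNReal) g := by
      constructor
      · rw [← NNReal.coe_lt_coe]; norm_num
      · intro a b
        have hk := key a.1 a.2 b.1 b.2
        have heq : (a.1 - T.symm (F a.1 - y)) - (b.1 - T.symm (F b.1 - y))
            = (a.1 - b.1) - T.symm (F a.1 - F b.1) := by
          simp only [map_sub]; abel
        rw [edist_dist, edist_dist]
        have hdist : dist (g a) (g b) ≤ (1/2) * dist a b := by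
          have hd1 : dist (g a) (g b) = ‖(a.1 - b.1) - T.symm (F a.1 - F b.1)‖ := by
            rw [hg]
            simp only [Subtype.dist_eq, dist_eq_norm]
            rw [heq]
          rw [hd1, Subtype.dist_eq, dist_eq_norm]
          exact hk
        calc ENNReal.ofReal (dist (g a) (g b)) ≤ ENNReal.ofReal ((1/2) * dist a b) :=
              ENNReal.ofReal_le_ofReal hdist
          _ = (1/2 : NNReal) * ENNReal.ofReal (dist a b) := by
              rw [ENNReal.ofReal_mul (by norm_num),
                ENNReal.ofReal_eq_coe_nnreal (by norm_num : (0:ℝ) ≤ 1/2)]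
              congr 1
    set x := hcontract.fixedPoint with hxdef
    have hxfix : g x = x := hcontract.fixedPoint_isFixedPt
    have hFx : F x.1 = y := by
      have h1 : x.1 - T.symm (F x.1 - y) = x.1 := congrArg Subtype.val hxfix
      have h2 : T.symm (F x.1 - y) = 0 := sub_eq_self.mp h1
      have h3 : F x.1 - y = 0 := by
        have := congrArg T h2
        simpa using this
      exact sub_eq_zero.mp h3
    refine ⟨x.1, ⟨x.2, hFx⟩, ?_⟩
    intro z ⟨hz, hFz⟩
    have hle := part2 z hz x.1 x.2
    rw [hFz, hFx, sub_self, norm_zero, mul_zero] at hle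
    have hz0 : z - x.1 = 0 := by
      have hnn := norm_nonneg (z - x.1)
      have : ‖z - x.1‖ = 0 := le_antisymm hle hnn
      exact norm_eq_zero.mp this
    exact sub_eq_zero.mp hz0
  · intro x₁ x₂ h₁ h₂ _ _
    exact part2 x₁ h₁ x₂ h₂
end

section
/- Fix Λ > 0, η > 0, integers M ≥ N ≥ 1, real numbers x_1, …, x_M, and set z_k := x_k + i·η. Let φ_1, …, φ_N : ℝ → ℂ be integrable on (0,Λ) and define φ̂_j(z) := ∫₀^Λ φ_j(s)·exp(i·z·s) ds. Let T be the M×N matrix with entries T_{kj} = −i·z_k·φ̂_j(z_k). Suppose there exist an index j⋆ and s⋆ ∈ (0,Λ] such that φ_{j⋆}(s) = 0 for s ∈ [0,s⋆] and φ_{j⋆}(s) = ∫_{s⋆}^s g(u) du for all s ∈ [s⋆,Λ], where g is integrable on (s⋆,Λ). Then σ_min(T) ≤ √M·exp(−η·s⋆)·(|φ_{j⋆}(s⋆)| + |φ_{j⋆}(Λ)| + ∫_{s⋆}^Λ |g(s)| ds), where σ_min(T) := inf over unit vectors θ ∈ ℂ^N of ‖T·θ‖₂. -/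
/-!
Testing against the coordinate vector `e_{j⋆}` gives `σ_min(T) ≤ ‖T e_{j⋆}‖`, and this column has
`M` entries of the form `-c ∫₀^Λ φ(s) e^{cs} ds` with `c = i z_k`, `Re c = -η`. As `φ` vanishes on
`[0, s⋆]` and is the primitive of `g` from `s⋆`, Fubini on the triangle `s⋆ < u ≤ s ≤ Λ` performs
the integration by parts without differentiating `φ`:
`c ∫_{s⋆}^Λ φ(s) e^{cs} ds = φ(Λ) e^{cΛ} - ∫_{s⋆}^Λ g(u) e^{cu} du`,
and `|e^{cs}| ≤ e^{-η s⋆}` for `s ≥ s⋆`.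
-/

open scoped Matrix
open MeasureTheory

open Set

theorem intervalIntegral.integral_primitive_mul {𝕜 : Type*} [RCLike 𝕜] {a b : ℝ} (hab : a ≤ b)
    {g E : ℝ → 𝕜} (hg : IntervalIntegrable g volume a b) (hE : IntervalIntegrable E volume a b) :
    ∫ s in a..b, (∫ u in a..s, g u) * E s = ∫ u in a..b, g u * ∫ s in u..b, E s := by
  set μ := volume.restrict (Ioc a b)
  set F : ℝ × ℝ → 𝕜 := {p | p.2 ≤ p.1}.indicator fun p => E p.1 * g p.2
  have hF : Integrable F (μ.prod μ) :=
    (hE.1.mul_prod hg.1).indicator (measurableSet_le measurable_snd measurable_fst)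
  have hsection_fst : ∀ s ∈ Ioc a b, ∫ u, F (s, u) ∂μ = (∫ u in a..s, g u) * E s := by
    intro s hs
    have hF_s : (fun u => F (s, u)) = (Iic s).indicator fun u => g u * E s := by
      ext u; by_cases h : u ≤ s <;> simp [F, h, mul_comm]
    rw [hF_s, MeasureTheory.integral_indicator measurableSet_Iic,
      Measure.restrict_restrict measurableSet_Iic, Iic_inter_Ioc_of_le hs.2,
      intervalIntegral.integral_of_le hs.1.le, MeasureTheory.integral_mul_const]
  have hsection_snd : ∀ u ∈ Ioc a b, ∫ s, F (s, u) ∂μ = g u * ∫ s in u..b, E s := by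
    intro u hu
    have hF_u : (fun s => F (s, u)) = (Ici u).indicator fun s => g u * E s := by
      ext s; by_cases h : u ≤ s <;> simp [F, h, mul_comm]
    have hslice : Ici u ∩ Ioc a b = Icc u b := by
      ext s
      simp only [mem_inter_iff, mem_Ici, mem_Ioc, mem_Icc]
      exact ⟨fun h => ⟨h.1, h.2.2⟩, fun h => ⟨h.1, hu.1.trans_le h.1, h.2⟩⟩
    rw [hF_u, MeasureTheory.integral_indicator measurableSet_Ici,
      Measure.restrict_restrict measurableSet_Ici, hslice, integral_Icc_eq_integral_Ioc,
      ← intervalIntegral.integral_of_le hu.2, intervalIntegral.integral_const_mul]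
  rw [intervalIntegral.integral_of_le hab, intervalIntegral.integral_of_le hab,
    ← setIntegral_congr_fun measurableSet_Ioc hsection_fst,
    ← setIntegral_congr_fun measurableSet_Ioc hsection_snd]
  exact integral_integral_swap hF

theorem norm_cexp_mul_ofReal_le {c : ℂ} (hc : c.re ≤ 0) {a s : ℝ} (has : a ≤ s) :
    ‖Complex.exp (c * s)‖ ≤ Real.exp (c.re * a) := by
  rw [Complex.norm_exp, Complex.re_mul_ofReal]
  exact Real.exp_le_exp.2 (mul_le_mul_of_nonpos_left has hc)

theorem integral_primitive_mul_cexp {a b : ℝ} (hab : a ≤ b) {g : ℝ → ℂ}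
    (hg : IntervalIntegrable g volume a b) {c : ℂ} (hc : c ≠ 0) :
    c * ∫ s in a..b, (∫ u in a..s, g u) * Complex.exp (c * s)
      = (∫ u in a..b, g u) * Complex.exp (c * b) - ∫ u in a..b, g u * Complex.exp (c * u) := by
  have hexp : Continuous fun s : ℝ => Complex.exp (c * s) := by fun_prop
  rw [intervalIntegral.integral_primitive_mul hab hg (hexp.intervalIntegrable a b),
    ← intervalIntegral.integral_const_mul, ← intervalIntegral.integral_mul_const,
    ← intervalIntegral.integral_sub (hg.mul_const _) (hg.mul_continuousOn hexp.continuousOn)]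
  refine intervalIntegral.integral_congr fun u _ => ?_
  rw [integral_exp_mul_complex hc]
  field_simp

theorem norm_mul_integral_primitive_mul_cexp_le {a b : ℝ} (hab : a ≤ b) {g : ℝ → ℂ}
    (hg : IntervalIntegrable g volume a b) {c : ℂ} (hc : c.re ≤ 0) :
    ‖c * ∫ s in a..b, (∫ u in a..s, g u) * Complex.exp (c * s)‖
      ≤ Real.exp (c.re * a) * (‖∫ u in a..b, g u‖ + ∫ u in a..b, ‖g u‖) := by
  rcases eq_or_ne c 0 with rfl | hc0
  · have := intervalIntegral.integral_nonneg (μ := volume) hab fun u _ => norm_nonneg (g u)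
    simp only [zero_mul, norm_zero]
    positivity
  rw [integral_primitive_mul_cexp hab hg hc0]
  calc _ ≤ ‖(∫ u in a..b, g u) * Complex.exp (c * b)‖
        + ‖∫ u in a..b, g u * Complex.exp (c * u)‖ := norm_sub_le _ _
    _ ≤ ‖∫ u in a..b, g u‖ * Real.exp (c.re * a)
        + ∫ u in a..b, ‖g u‖ * Real.exp (c.re * a) := by
      gcongr ?_ + ?_
      · rw [norm_mul]
        gcongr
        exact norm_cexp_mul_ofReal_le hc hab
      · refine intervalIntegral.norm_integral_le_of_norm_le hab
          (ae_of_all _ fun u hu => ?_) (hg.norm.mul_const _)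
        rw [norm_mul]
        gcongr
        exact norm_cexp_mul_ofReal_le hc hu.1.le
    _ = _ := by rw [intervalIntegral.integral_mul_const]; ring

theorem norm_mul_integral_mul_cexp_le_of_eqOn_primitive {a s₀ b : ℝ} (has₀ : a ≤ s₀)
    (hs₀b : s₀ ≤ b) {f g : ℝ → ℂ} (hf : IntervalIntegrable f volume a b)
    (hg : IntervalIntegrable g volume s₀ b) (hf0 : ∀ s ∈ Icc a s₀, f s = 0)
    (hfg : ∀ s ∈ Icc s₀ b, f s = ∫ u in s₀..s, g u) {c : ℂ} (hc : c.re ≤ 0) :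
    ‖c * ∫ s in a..b, f s * Complex.exp (c * s)‖
      ≤ Real.exp (c.re * s₀) * (‖f b‖ + ∫ u in s₀..b, ‖g u‖) := by
  have hfE : IntervalIntegrable (fun s => f s * Complex.exp (c * s)) volume a b :=
    hf.mul_continuousOn (by fun_prop)
  have hvanish : ∫ s in a..s₀, f s * Complex.exp (c * s) = 0 := by
    refine (intervalIntegral.integral_congr fun s hs => ?_).trans intervalIntegral.integral_zero
    rw [uIcc_of_le has₀] at hs
    simp only [hf0 s hs, zero_mul]
  have hprimitive : ∫ s in s₀..b, f s * Complex.exp (c * s)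
      = ∫ s in s₀..b, (∫ u in s₀..s, g u) * Complex.exp (c * s) :=
    intervalIntegral.integral_congr fun s hs => by rw [hfg s (uIcc_of_le hs₀b ▸ hs)]
  have hfb : f b = ∫ u in s₀..b, g u := hfg b ⟨hs₀b, le_rfl⟩
  have hfE₀ : IntervalIntegrable (fun s => f s * Complex.exp (c * s)) volume a s₀ :=
    hfE.mono_set (uIcc_subset_uIcc left_mem_uIcc (mem_uIcc_of_le has₀ hs₀b))
  rw [← sub_zero (∫ s in a..b, _), ← hvanish,
    intervalIntegral.integral_interval_sub_left hfE hfE₀, hprimitive, hfb]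
  exact norm_mul_integral_primitive_mul_cexp_le hs₀b hg hc

theorem EuclideanSpace.norm_le_sqrt_card_mul {ι 𝕜 : Type*} [Fintype ι] [RCLike 𝕜]
    (v : EuclideanSpace 𝕜 ι) {C : ℝ} (hC : ∀ i, ‖v i‖ ≤ C) :
    ‖v‖ ≤ √(Fintype.card ι) * C := by
  rcases isEmpty_or_nonempty ι with hι | hι
  · simp [Subsingleton.elim v 0]
  have hC0 : 0 ≤ C := (norm_nonneg _).trans (hC hι.some)
  calc ‖v‖ = √(∑ i, ‖v i‖ ^ 2) := EuclideanSpace.norm_eq v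
    _ ≤ √(∑ _ : ι, C ^ 2) := by gcongr with i; exact hC i
    _ = √(Fintype.card ι) * C := by
      rw [Finset.sum_const, Finset.card_univ, nsmul_eq_mul, Real.sqrt_mul (Nat.cast_nonneg _),
        Real.sqrt_sq hC0]

theorem Matrix.toEuclideanLin_single_one_apply {m n : ℕ} (L : Matrix (Fin m) (Fin n) ℂ)
    (j : Fin n) (k : Fin m) : Matrix.toEuclideanLin L (EuclideanSpace.single j 1) k = L k j := by
  simp [Matrix.toEuclideanLin, Matrix.mulVec_single]

theorem sigmaMin_le_norm_toEuclideanLin_s17 {m n : ℕ} (L : Matrix (Fin m) (Fin n) ℂ)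
    (θ : EuclideanSpace ℂ (Fin n)) (hθ : ‖θ‖ = 1) : sigmaMin L ≤ ‖Matrix.toEuclideanLin L θ‖ := by
  refine ciInf_le ⟨0, ?_⟩ (⟨θ, hθ⟩ : {x : EuclideanSpace ℂ (Fin n) // ‖x‖ = 1})
  rintro _ ⟨_, rfl⟩
  exact norm_nonneg _

theorem sigmaMin_le_sqrt_mul_of_norm_apply_le {m n : ℕ} (L : Matrix (Fin m) (Fin n) ℂ)
    (j : Fin n) {C : ℝ} (hC : ∀ k, ‖L k j‖ ≤ C) : sigmaMin L ≤ √m * C := by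
  have hcol := EuclideanSpace.norm_le_sqrt_card_mul
    (Matrix.toEuclideanLin L (EuclideanSpace.single j 1)) fun k =>
      (Matrix.toEuclideanLin_single_one_apply L j k).symm ▸ hC k
  rw [Fintype.card_fin] at hcol
  exact (sigmaMin_le_norm_toEuclideanLin_s17 L _ (by simp)).trans hcol

theorem stmt17_general (Λ η : ℝ) (hη : 0 < η)
    (M N : ℕ)
    (x : Fin M → ℝ) (z : Fin M → ℂ)
    (hz : ∀ k, z k = ((x k : ℝ) : ℂ) + (η : ℂ) * Complex.I)
    (φ : Fin N → ℝ → ℂ)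
    (hφint : ∀ j, IntervalIntegrable (φ j) volume 0 Λ)
    (φhat : Fin N → ℂ → ℂ)
    (hφhat : ∀ j w, φhat j w = ∫ s in (0:ℝ)..Λ, φ j s * Complex.exp (Complex.I * w * (s : ℂ)))
    (T : Matrix (Fin M) (Fin N) ℂ)
    (hT : ∀ k j, T k j = -Complex.I * z k * φhat j (z k))
    (jstar : Fin N) (sstar : ℝ) (hsstar0 : 0 < sstar) (hsstarΛ : sstar ≤ Λ)
    (g : ℝ → ℂ) (hg : IntervalIntegrable g volume sstar Λ)
    (hφ0 : ∀ s ∈ Set.Icc (0 : ℝ) sstar, φ jstar s = 0)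
    (hφg : ∀ s ∈ Set.Icc sstar Λ, φ jstar s = ∫ u in sstar..s, g u) :
    sigmaMin T ≤ Real.sqrt M * Real.exp (-η * sstar) *
      (‖φ jstar sstar‖ + ‖φ jstar Λ‖
        + ∫ s in sstar..Λ, ‖g s‖) := by
  rw [hφ0 sstar ⟨hsstar0.le, le_rfl⟩, norm_zero, zero_add, mul_assoc]
  refine sigmaMin_le_sqrt_mul_of_norm_apply_le T jstar fun k => ?_
  have hre : (Complex.I * z k).re = -η := by simp [hz k]
  have hentry := norm_mul_integral_mul_cexp_le_of_eqOn_primitive hsstar0.le hsstarΛ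
    (hφint jstar) hg hφ0 hφg (c := Complex.I * z k) (by linarith)
  rwa [hre, ← norm_neg, ← neg_mul, ← neg_mul, ← hφhat, ← hT] at hentry

theorem stmt17 (Λ η : ℝ) (hΛ : 0 < Λ) (hη : 0 < η)
    (M N : ℕ) (hN : 1 ≤ N) (hMN : N ≤ M)
    (x : Fin M → ℝ) (z : Fin M → ℂ)
    (hz : ∀ k, z k = ((x k : ℝ) : ℂ) + (η : ℂ) * Complex.I)
    (φ : Fin N → ℝ → ℂ)
    (hφint : ∀ j, IntervalIntegrable (φ j) volume 0 Λ)
    (φhat : Fin N → ℂ → ℂ)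
    (hφhat : ∀ j w, φhat j w = ∫ s in (0:ℝ)..Λ, φ j s * Complex.exp (Complex.I * w * (s : ℂ)))
    (T : Matrix (Fin M) (Fin N) ℂ)
    (hT : ∀ k j, T k j = -Complex.I * z k * φhat j (z k))
    (jstar : Fin N) (sstar : ℝ) (hsstar0 : 0 < sstar) (hsstarΛ : sstar ≤ Λ)
    (g : ℝ → ℂ) (hg : IntervalIntegrable g volume sstar Λ)
    (hφ0 : ∀ s ∈ Set.Icc (0 : ℝ) sstar, φ jstar s = 0)
    (hφg : ∀ s ∈ Set.Icc sstar Λ, φ jstar s = ∫ u in sstar..s, g u) :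
    sigmaMin T ≤ Real.sqrt M * Real.exp (-η * sstar) *
      (‖φ jstar sstar‖ + ‖φ jstar Λ‖
        + ∫ s in sstar..Λ, ‖g s‖) :=
  stmt17_general Λ η hη M N x z hz φ hφint φhat hφhat T hT jstar sstar hsstar0 hsstarΛ g hg hφ0 hφg
end
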